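/- Let G be a countable group, μ a random forest of finite width on G, and suppose there exists a constant K such that ‖f‖_{ℓ²(G)} ≤ K·‖f‖_{T¹(G)} for all finitely supported f : G → ℂ. Then deg(μ)² / width(μ) ≤ 4K². -/

import Mathlib

/-!
Fix an injection `ι : G → ℕ` and orient every edge of a forest towards the root of its component,
the vertex of least index; then every vertex has at most one parent. Let `E a b` be the event that
`b` is the parent of `a` and `f g = μ{(1,g) ∈ F}`. By invariance `f (a⁻¹ b) = μ{(a,b) ∈ F}`, which
splits as `μ (E a b) + (μ{(a,b) ∈ F} - μ (E a b))`: the first part has row sums at most `1` since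
parents are unique, and the second is bounded by `μ (E b a)` since an edge not oriented one way is
oriented the other, so its column sums are at most `1` too. Hence `‖f‖_{T¹} ≤ 2`, the hypothesis
gives `‖f‖_{ℓ²} ≤ 2K`, and Cauchy–Schwarz on the support of `f` gives
`deg(μ)² ≤ width(μ) ‖f‖²_{ℓ²}`. All events are measurable because `G` is countable, so reachability
is a countable union of conditions on finitely many coordinates.
-/

open MeasureTheory ENNReal

def forestGraph {G : Type*} (F : G × G → Bool) : SimpleGraph G :=
  SimpleGraph.fromRel fun a b => F (a, b) = true

def IsForest {G : Type*} (F : G × G → Bool) : Prop :=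
  (∀ a b, F (a, b) = F (b, a)) ∧ (∀ a, F (a, a) = false) ∧ (forestGraph F).IsAcyclic

/-- The `T¹`-norm of a function `f : K → ℂ`. -/
noncomputable def T1norm {K : Type*} [Group K] (f : K → ℂ) : ℝ≥0∞ :=
  ⨅ (d : (K × K → ℂ) × (K × K → ℂ))
    (_ : ∀ g g' : K, f (g⁻¹ * g') = d.1 (g, g') + d.2 (g, g')),
      (⨆ g : K, ∑' g' : K, ENNReal.ofReal ‖d.1 (g, g')‖) +
      (⨆ g : K, ∑' g' : K, ENNReal.ofReal ‖d.2 (g', g)‖)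

namespace SimpleGraph

variable {V : Type*} (H : SimpleGraph V) (ι : V → ℕ)

def IsRootOf (a r : V) : Prop :=
  H.Reachable a r ∧ ∀ x, H.Reachable a x → ι r ≤ ι x

/-- `b` is the neighbour of `a` on the path from `a` to the root of its component. -/
def IsParent (a b : V) : Prop :=
  H.Adj a b ∧ ∃ r, H.IsRootOf ι a r ∧ ∃ p : H.Walk b r, a ∉ p.support

variable {H ι}

theorem exists_isRootOf (a : V) : ∃ r, H.IsRootOf ι a r :=
  have hne : {x | H.Reachable a x}.Nonempty := ⟨a, Reachable.refl a⟩
  ⟨_, Function.argminOn_mem ι _ hne, fun _ hx => Function.argminOn_le ι _ hx⟩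

theorem IsRootOf.unique (hι : ι.Injective) {a r r' : V} (h : H.IsRootOf ι a r)
    (h' : H.IsRootOf ι a r') : r = r' :=
  hι <| (h.2 _ h'.1).antisymm (h'.2 _ h.1)

theorem isRootOf_congr {a b : V} (hab : H.Reachable a b) (r : V) :
    H.IsRootOf ι a r ↔ H.IsRootOf ι b r :=
  ⟨fun ⟨h, hmin⟩ => ⟨hab.symm.trans h, fun x hx => hmin x (hab.trans hx)⟩,
    fun ⟨h, hmin⟩ => ⟨hab.trans h, fun x hx => hmin x (hab.symm.trans hx)⟩⟩

theorem isParent_or_isParent {a b : V} (hab : H.Adj a b) :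
    H.IsParent ι a b ∨ H.IsParent ι b a := by
  classical
  obtain ⟨r, hr⟩ := exists_isRootOf (H := H) (ι := ι) a
  obtain ⟨q, hq⟩ := hr.1.symm.exists_isPath
  by_cases hb : b ∈ q.support
  · -- the part of the path from `r` to `a` before `b` does not meet `a`
    refine .inl ⟨hab, r, hr, (q.takeUntil b hb).reverse, ?_⟩
    rw [Walk.support_reverse, List.mem_reverse]
    exact Walk.endpoint_notMem_support_takeUntil hq hb hab.ne
  · exact .inr ⟨hab.symm, r, (isRootOf_congr hab.reachable r).mp hr, q.reverse, by simpa using hb⟩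

theorem IsAcyclic.isParent_unique (hH : H.IsAcyclic) (hι : ι.Injective) {a b c : V}
    (hb : H.IsParent ι a b) (hc : H.IsParent ι a c) : b = c := by
  classical
  obtain ⟨hab, r, hr, p, hp⟩ := hb
  obtain ⟨hac, r', hr', q, hq⟩ := hc
  obtain rfl := hr.unique hι hr'
  have hp' : a ∉ p.bypass.support := fun h => hp (p.support_bypass_subset_support h)
  have hq' : a ∉ q.bypass.support := fun h => hq (q.support_bypass_subset_support h)
  have hpq := (hH.subsingleton_path a r).elim
    ⟨.cons hab p.bypass, p.bypass_isPath.cons hp'⟩ ⟨.cons hac q.bypass, q.bypass_isPath.cons hq'⟩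
  simpa using congrArg (fun w : H.Path a r => w.1.getVert 1) hpq

section Measurability

variable {Ω V : Type*} [MeasurableSpace Ω] [Countable V] {H : Ω → SimpleGraph V}

theorem measurable_exists_walk_support_subset (hH : ∀ x y, Measurable fun ω => (H ω).Adj x y)
    (S : Set V) (a b : V) : Measurable fun ω => ∃ p : (H ω).Walk a b, ∀ x ∈ p.support, x ∈ S := by
  have hlen : ∀ n a, Measurable fun ω =>
      ∃ p : (H ω).Walk a b, p.length = n ∧ ∀ x ∈ p.support, x ∈ S := by
    intro n
    induction n with
    | zero =>
      intro a
      have hnil : ∀ ω, (∃ p : (H ω).Walk a b, p.length = 0 ∧ ∀ x ∈ p.support, x ∈ S) ↔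
          a = b ∧ a ∈ S := by
        refine fun ω => ⟨fun ⟨p, hp, hS⟩ => ?_, ?_⟩
        · cases p with
          | nil => exact ⟨rfl, hS _ (by simp)⟩
          | cons => simp at hp
        · rintro ⟨rfl, ha⟩
          exact ⟨.nil, rfl, by simpa using ha⟩
      simp_rw [hnil]
      exact measurable_const
    | succ n ih =>
      intro a
      have hcons : ∀ ω, (∃ p : (H ω).Walk a b, p.length = n + 1 ∧ ∀ x ∈ p.support, x ∈ S) ↔
          a ∈ S ∧ ∃ c, (H ω).Adj a c ∧
            ∃ p : (H ω).Walk c b, p.length = n ∧ ∀ x ∈ p.support, x ∈ S := by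
        refine fun ω => ⟨fun ⟨p, hp, hS⟩ => ?_, ?_⟩
        · cases p with
          | nil => simp at hp
          | cons h q =>
            exact ⟨hS _ (by simp), _, h, q, by simpa using hp, fun x hx => hS x (by simp [hx])⟩
        · rintro ⟨ha, c, h, q, hq, hS⟩
          exact ⟨.cons h q, by simp [hq], by simpa [ha] using hS⟩
      simp_rw [hcons]
      exact measurable_const.and (.exists fun c => (hH a c).and (ih c))
  have hex : ∀ ω, (∃ p : (H ω).Walk a b, ∀ x ∈ p.support, x ∈ S) ↔
      ∃ n, ∃ p : (H ω).Walk a b, p.length = n ∧ ∀ x ∈ p.support, x ∈ S :=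
    fun ω => ⟨fun ⟨p, hS⟩ => ⟨_, p, rfl, hS⟩, fun ⟨_, p, _, hS⟩ => ⟨p, hS⟩⟩
  simp_rw [hex]
  exact .exists fun n => hlen n a

theorem measurable_reachable (hH : ∀ x y, Measurable fun ω => (H ω).Adj x y) (a b : V) :
    Measurable fun ω => (H ω).Reachable a b := by
  simpa [Reachable] using measurable_exists_walk_support_subset hH Set.univ a b

theorem measurable_isAcyclic (hH : ∀ x y, Measurable fun ω => (H ω).Adj x y) :
    Measurable fun ω => (H ω).IsAcyclic := by
  simp_rw [isAcyclic_iff_forall_adj_isBridge, isBridge_iff]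
  have hdel : ∀ a b x y, Measurable fun ω => ((H ω).deleteEdges {s(a, b)}).Adj x y := by
    simpa [deleteEdges_adj] using fun a b x y => (hH x y).and measurable_const
  exact .forall fun a => .forall fun b => (hH a b).imp (measurable_reachable (hdel a b) a b).not

theorem measurable_isParent (hH : ∀ x y, Measurable fun ω => (H ω).Adj x y) (ι : V → ℕ)
    (a b : V) : Measurable fun ω => (H ω).IsParent ι a b := by
  have havoid : ∀ r, Measurable fun ω => ∃ p : (H ω).Walk b r, a ∉ p.support := by
    simpa [← List.forall_mem_ne, eq_comm] using
      fun r => measurable_exists_walk_support_subset hH {a}ᶜ b r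
  have hroot : ∀ r, Measurable fun ω => (H ω).IsRootOf ι a r := fun r =>
    (measurable_reachable hH a r).and
      (.forall fun x => (measurable_reachable hH a x).imp measurable_const)
  exact (hH a b).and (.exists fun r => (hroot r).and (havoid r))

end Measurability

end SimpleGraph

section RandomForest

variable {G : Type*}

theorem measurable_apply_eq (p : G × G) (c : Bool) :
    Measurable fun F : G × G → Bool => F p = c := by
  fun_prop

theorem measure_setOf_apply_eq_of_map_eq [Group G] (μ : Measure (G × G → Bool))
    (hinv : ∀ g : G,
      Measure.map (fun (F : (G × G) → Bool) (p : G × G) => F (g⁻¹ * p.1, g⁻¹ * p.2)) μ = μ)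
    (a b : G) : μ {F | F (a, b) = true} = μ {F | F (1, a⁻¹ * b) = true} := by
  have hshift : Measurable fun (F : G × G → Bool) (p : G × G) => F (a * p.1, a * p.2) := by
    fun_prop
  have h := congrArg (fun ν : Measure _ => ν {F | F (1, a⁻¹ * b) = true}) (hinv a⁻¹)
  simp only [inv_inv] at h
  rw [← h, Measure.map_apply hshift (measurable_apply_eq _ _).setOf]
  simp

theorem measurable_forestGraph_adj (a b : G) :
    Measurable fun F : G × G → Bool => (forestGraph F).Adj a b := by
  simp only [forestGraph, SimpleGraph.fromRel_adj]
  exact measurable_const.and ((measurable_apply_eq _ _).or (measurable_apply_eq _ _))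

def parentEvent (ι : G → ℕ) (a b : G) : Set (G × G → Bool) :=
  {F | IsForest F ∧ (forestGraph F).IsParent ι a b}

theorem parentEvent_subset (ι : G → ℕ) (a b : G) :
    parentEvent ι a b ⊆ {F | F (a, b) = true} := by
  rintro F ⟨hF, hab, -⟩
  obtain ⟨-, h | h⟩ := (SimpleGraph.fromRel_adj _ _ _).mp hab
  · exact h
  · exact (hF.1 a b).trans h

theorem pairwise_disjoint_parentEvent {ι : G → ℕ} (hι : ι.Injective) (a : G) :
    Pairwise (Function.onFun Disjoint (parentEvent ι a)) := fun _ _ hbc =>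
  Set.disjoint_left.mpr fun _ hb hc => hbc (hb.1.2.2.isParent_unique hι hb.2 hc.2)

theorem setOf_apply_subset_parentEvent_union (ι : G → ℕ) (a b : G) :
    {F | F (a, b) = true} ⊆ parentEvent ι a b ∪ parentEvent ι b a ∪ {F | IsForest F}ᶜ := by
  intro F hab
  by_cases hF : IsForest F
  · have hne : a ≠ b := by
      rintro rfl
      simp [hF.2.1 a] at hab
    rcases SimpleGraph.isParent_or_isParent (ι := ι)
      ((SimpleGraph.fromRel_adj _ _ _).mpr ⟨hne, .inl hab⟩ : (forestGraph F).Adj a b) with h | h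
    · exact .inl (.inl ⟨hF, h⟩)
    · exact .inl (.inr ⟨hF, h⟩)
  · exact .inr hF

variable [Countable G]

theorem measurableSet_isForest : MeasurableSet {F : G × G → Bool | IsForest F} := by
  refine Measurable.setOf (.and ?_ (.and ?_ ?_))
  · exact .forall fun a => .forall fun b => by fun_prop
  · exact .forall fun a => measurable_apply_eq _ _
  · exact SimpleGraph.measurable_isAcyclic measurable_forestGraph_adj

theorem measurableSet_parentEvent (ι : G → ℕ) (a b : G) : MeasurableSet (parentEvent ι a b) :=
  measurableSet_isForest.inter
    (SimpleGraph.measurable_isParent measurable_forestGraph_adj ι a b).setOf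

theorem measure_setOf_apply_le_parentEvent (μ : Measure (G × G → Bool)) [IsProbabilityMeasure μ]
    (hforest : μ {F | IsForest F} = 1) (ι : G → ℕ) (a b : G) :
    μ {F | F (a, b) = true} ≤ μ (parentEvent ι a b) + μ (parentEvent ι b a) := by
  have hnull : μ {F | IsForest F}ᶜ = 0 :=
    (prob_compl_eq_zero_iff measurableSet_isForest).mpr hforest
  calc μ {F | F (a, b) = true}
      ≤ μ (parentEvent ι a b ∪ parentEvent ι b a ∪ {F | IsForest F}ᶜ) :=
        measure_mono (setOf_apply_subset_parentEvent_union ι a b)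
    _ ≤ μ (parentEvent ι a b) + μ (parentEvent ι b a) + μ {F | IsForest F}ᶜ :=
        (measure_union_le _ _).trans (add_le_add_left (measure_union_le _ _) _)
    _ = μ (parentEvent ι a b) + μ (parentEvent ι b a) := by rw [hnull, add_zero]

end RandomForest

theorem ofReal_norm_coe_toReal {x : ℝ≥0∞} (hx : x ≠ ∞) :
    ENNReal.ofReal ‖((x.toReal : ℝ) : ℂ)‖ = x := by
  rw [Complex.norm_real, Real.norm_of_nonneg toReal_nonneg, ofReal_toReal hx]

theorem T1norm_le_two {G Ω : Type*} [Group G] [MeasurableSpace Ω] (μ : Measure Ω)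
    [IsProbabilityMeasure μ] {f : G → ℂ} {T E : G → G → Set Ω}
    (hf : ∀ a b, f (a⁻¹ * b) = (μ (T a b)).toReal) (hE : ∀ a b, MeasurableSet (E a b))
    (hET : ∀ a b, E a b ⊆ T a b) (hTE : ∀ a b, μ (T a b) ≤ μ (E a b) + μ (E b a))
    (hdisj : ∀ a, Pairwise (Function.onFun Disjoint (E a))) : T1norm f ≤ 2 := by
  have hrow : ∀ a, ∑' b, μ (E a b) ≤ 1 := fun a =>
    (tsum_meas_le_meas_iUnion_of_disjoint μ (hE a) (hdisj a)).trans prob_le_one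
  let d : (G × G → ℂ) × (G × G → ℂ) :=
    (fun p => (μ (E p.1 p.2)).toReal, fun p => (μ (T p.1 p.2) - μ (E p.1 p.2)).toReal)
  have hd : ∀ a b, f (a⁻¹ * b) = d.1 (a, b) + d.2 (a, b) := fun a b => by
    simp only [hf, d, toReal_sub_of_le (measure_mono (hET a b)) (measure_ne_top μ _)]
    push_cast
    ring
  have h1 : ⨆ a, ∑' b, ENNReal.ofReal ‖d.1 (a, b)‖ ≤ 1 := iSup_le fun a => by
    simpa only [d, ofReal_norm_coe_toReal (measure_ne_top μ _)] using hrow a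
  have h2 : ⨆ a, ∑' b, ENNReal.ofReal ‖d.2 (b, a)‖ ≤ 1 := iSup_le fun a => by
    refine le_trans (ENNReal.tsum_le_tsum fun b => ?_) (hrow a)
    rw [ofReal_norm_coe_toReal (sub_ne_top (measure_ne_top μ _)), tsub_le_iff_left]
    exact hTE b a
  calc T1norm f
      ≤ (⨆ a, ∑' b, ENNReal.ofReal ‖d.1 (a, b)‖) + ⨆ a, ∑' b, ENNReal.ofReal ‖d.2 (b, a)‖ :=
        iInf₂_le d hd
    _ ≤ 2 := by simpa [one_add_one_eq_two] using add_le_add h1 h2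

theorem sq_tsum_div_ncard_support_le {α : Type*} {x : α → ℝ} (hx : (Function.support x).Finite) :
    (∑' i, x i) ^ 2 / (Function.support x).ncard ≤ ∑' i, x i ^ 2 := by
  have hzero : ∀ i ∉ hx.toFinset, x i = 0 := by simp
  rw [tsum_eq_sum hzero, tsum_eq_sum (s := hx.toFinset) fun i hi => by simp [hzero i hi],
    Set.ncard_eq_toFinset_card _ hx]
  refine div_le_of_le_mul₀ (Nat.cast_nonneg _) (Finset.sum_nonneg fun i _ => sq_nonneg _) ?_
  rw [mul_comm]
  exact sq_sum_le_card_mul_sum_sq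

theorem le_four_mul_sq_of_ofReal_sqrt_le {S K : ℝ} {t : ℝ≥0∞} (ht : t ≤ 2)
    (h : ENNReal.ofReal √S ≤ ENNReal.ofReal K * t) : S ≤ 4 * K ^ 2 := by
  have h2K : ENNReal.ofReal √S ≤ ENNReal.ofReal (K * 2) := by
    rw [ofReal_mul' zero_le_two, ofReal_ofNat]
    exact h.trans (by gcongr)
  rcases ofReal_le_ofReal_iff'.mp h2K with h | h
  · nlinarith [(Real.sqrt_le_iff.mp h).2]
  · nlinarith [Real.sqrt_eq_zero'.mp (le_antisymm h (Real.sqrt_nonneg S))]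

/-- if `‖·‖_{ℓ²(G)} ≤ K‖·‖_{T¹(G)}` on finitely supported functions, then any
random forest `μ` of finite width on the countable group `G` satisfies
`deg(μ)²/width(μ) ≤ 4K²`. -/
theorem stmt12 {G : Type*} [Group G] [Countable G]
    (μ : Measure ((G × G) → Bool)) [IsProbabilityMeasure μ]
    (hforest : μ {F | IsForest F} = 1)
    (hinv : ∀ g : G,
      Measure.map (fun (F : (G × G) → Bool) (p : G × G) => F (g⁻¹ * p.1, g⁻¹ * p.2)) μ = μ)
    (hwidth : {g : G | μ {F | F (1, g) = true} ≠ 0}.Finite)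
    (K : ℝ)
    (hK : ∀ f : G → ℂ, (Function.support f).Finite →
      ENNReal.ofReal (Real.sqrt (∑' g : G, ‖f g‖ ^ 2)) ≤ ENNReal.ofReal K * T1norm f) :
    (∑' g : G, (μ {F | F (1, g) = true}).toReal) ^ 2
        / ({g : G | μ {F | F (1, g) = true} ≠ 0}.ncard : ℝ) ≤ 4 * K ^ 2 := by
  obtain ⟨ι, hι⟩ := exists_injective_nat G
  set x : G → ℝ := fun g => (μ {F | F (1, g) = true}).toReal
  have hsupp : Function.support x = {g : G | μ {F | F (1, g) = true} ≠ 0} := by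
    ext g
    simp [x, toReal_eq_zero_iff, measure_ne_top]
  have hfin : (Function.support x).Finite := hsupp ▸ hwidth
  have hT1 : T1norm (fun g => (x g : ℂ)) ≤ 2 :=
    T1norm_le_two μ (fun a b => by simp [x, measure_setOf_apply_eq_of_map_eq μ hinv a b])
      (measurableSet_parentEvent ι) (parentEvent_subset ι)
      (measure_setOf_apply_le_parentEvent μ hforest ι) (pairwise_disjoint_parentEvent hι)
  have hℓ2 : ∑' g, x g ^ 2 ≤ 4 * K ^ 2 := by
    have h := hK (fun g => (x g : ℂ)) (hfin.subset fun g hg => by simpa using hg)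
    simp only [Complex.norm_real, Real.norm_eq_abs, sq_abs] at h
    exact le_four_mul_sq_of_ofReal_sqrt_le hT1 h
  rw [← hsupp]
  exact (sq_tsum_div_ncard_support_le hfin).trans hℓ2
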